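/- For a Vahlen matrix A = [[a,b],[c,d]] and x, y ∈ V such that cx+d and cy+d are invertible, the Möbius transformation satisfies Ax - Ay = Δ(A)·(y c~ + d~)⁻¹ (x - y) (cx + d)⁻¹, where Δ(A) = a d~ - b c~ is the (real, nonzero) pseudo-determinant and Ax = (ax+b)(cx+d)⁻¹. -/

import Mathlib

/-!
Let `g = F⁻¹ A` be the element of the Lipschitz group. Reversing `g x ĝ⁻¹ ∈ V ⊕ ℝ^{1,1}` shows
that `z = g~ ĝ` twisted-commutes with every vector, `x z = ẑ x`. Transported to the exterior
algebra, `x z - ẑ x` is the contraction of `z` by the functional `polar x`, and for a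
nondegenerate form an element killed by all these contractions is a scalar. Hence
`star g * g = g * star g = r` is real. Under `F`, Clifford conjugation `star` becomes
`[[a,b],[c,d]] ↦ [[d~,-b~],[-c~,a~]]`, so `Δ(A) = r` and `d~a - b~c = a~d - c~b = r`,
`d~b = b~d`, `a~c = c~a`. These give `(y c~ + d~)(a x + b) - (y a~ + b~)(c x + d) = r (x - y)`,
which at `x = y` turns `(y c~ + d~) A y` into `y a~ + b~`; the difference formula follows.
-/

open CliffordAlgebra

noncomputable def negQhat {V : Type*} [AddCommGroup V] [Module ℝ V]
    (Q : QuadraticForm ℝ V) : QuadraticForm ℝ (V × ℝ × ℝ) :=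
  QuadraticMap.prod (-Q) (QuadraticMap.prod QuadraticMap.sq (-QuadraticMap.sq))

/-- The Clifford map `j : V ⊕ ℝ^{1,1} → Mat₂(Cl(V))` (convention `v² = -Q v`). -/
noncomputable def jmat {V : Type*} [AddCommGroup V] [Module ℝ V]
    (Q : QuadraticForm ℝ V) (x : V × ℝ × ℝ) :
    Matrix (Fin 2) (Fin 2) (CliffordAlgebra (-Q)) :=
  !![ι (-Q) x.1, algebraMap ℝ _ (x.2.1 - x.2.2);
     algebraMap ℝ _ (x.2.1 + x.2.2), -ι (-Q) x.1]

/-- A Vahlen matrix: an element of `Mat₂(Cl(V))` corresponding, under the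
`(1,1)`-periodicity isomorphism `F`, to an element of the Lipschitz group
`Γ(V ⊕ ℝ^{1,1})`, i.e. an invertible `g` with `g x ĝ⁻¹ ∈ V ⊕ ℝ^{1,1}` for all
`x ∈ V ⊕ ℝ^{1,1}`. -/
def IsVahlen {V : Type*} [AddCommGroup V] [Module ℝ V] (Q : QuadraticForm ℝ V)
    (F : CliffordAlgebra (negQhat Q) ≃ₐ[ℝ] Matrix (Fin 2) (Fin 2) (CliffordAlgebra (-Q)))
    (A : Matrix (Fin 2) (Fin 2) (CliffordAlgebra (-Q))) : Prop :=
  IsUnit (F.symm A) ∧ ∀ x : V × ℝ × ℝ, ∃ y : V × ℝ × ℝ,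
    F.symm A * ι (negQhat Q) x * Ring.inverse (involute (F.symm A)) = ι (negQhat Q) y

/-- The pseudo-determinant `Δ([[a,b],[c,d]]) = a d~ - b c~`. -/
noncomputable def pdet {V : Type*} [AddCommGroup V] [Module ℝ V] (Q : QuadraticForm ℝ V)
    (A : Matrix (Fin 2) (Fin 2) (CliffordAlgebra (-Q))) : CliffordAlgebra (-Q) :=
  A 0 0 * reverse (A 1 1) - A 0 1 * reverse (A 1 0)


namespace CliffordAlgebra

variable {R M : Type*} [CommRing R] [AddCommGroup M] [Module R M] {Q : QuadraticForm R M}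

theorem contractLeft_mul (d : Module.Dual R M) (a b : CliffordAlgebra Q) :
    contractLeft d (a * b) = contractLeft d a * b + involute a * contractLeft d b := by
  induction a using CliffordAlgebra.induction generalizing b with
  | algebraMap r =>
    rw [contractLeft_algebraMap_mul, contractLeft_algebraMap, zero_mul, zero_add,
      AlgHom.commutes]
  | ι v =>
    rw [contractLeft_ι_mul, contractLeft_ι, involute_ι, Algebra.smul_def, neg_mul,
      sub_eq_add_neg]
  | mul a₁ a₂ h₁ h₂ =>
    rw [mul_assoc, h₁, h₂, h₁, map_mul]
    noncomm_ring
  | add a₁ a₂ h₁ h₂ =>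
    rw [add_mul, map_add, map_add, h₁, h₂, map_add, add_mul, add_mul]
    abel

theorem ι_mul_sub_involute_mul_ι (v : M) (a : CliffordAlgebra Q) :
    ι Q v * a - involute a * ι Q v = contractLeft (Q.polarBilin v) a := by
  induction a using CliffordAlgebra.induction with
  | algebraMap r => rw [AlgHom.commutes, Algebra.commutes, sub_self, contractLeft_algebraMap]
  | ι w =>
    rw [involute_ι, contractLeft_ι, neg_mul, sub_neg_eq_add, ι_mul_ι_add_swap]
    rfl
  | mul a₁ a₂ h₁ h₂ =>
    rw [contractLeft_mul, ← h₁, ← h₂, map_mul]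
    noncomm_ring
  | add a₁ a₂ h₁ h₂ =>
    rw [map_add, map_add, ← h₁, ← h₂, mul_add, add_mul]
    abel

theorem involute_mem_adjoin_ι_image {s : Set M} {p : CliffordAlgebra Q}
    (hp : p ∈ Algebra.adjoin R (ι Q '' s)) : involute p ∈ Algebra.adjoin R (ι Q '' s) := by
  induction hp using Algebra.adjoin_induction with
  | mem x hx =>
    obtain ⟨m, hm, rfl⟩ := hx
    rw [involute_ι]
    exact neg_mem (Algebra.subset_adjoin ⟨m, hm, rfl⟩)
  | algebraMap r => rw [AlgHom.commutes]; exact Subalgebra.algebraMap_mem _ r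
  | add x y _ _ hx hy => rw [map_add]; exact add_mem hx hy
  | mul x y _ _ hx hy => rw [map_mul]; exact mul_mem hx hy

theorem contractLeft_eq_zero_of_mem_adjoin {d : Module.Dual R M} {s : Set M}
    (hd : ∀ m ∈ s, d m = 0) {p : CliffordAlgebra Q} (hp : p ∈ Algebra.adjoin R (ι Q '' s)) :
    contractLeft d p = 0 := by
  induction hp using Algebra.adjoin_induction with
  | mem x hx =>
    obtain ⟨m, hm, rfl⟩ := hx
    rw [contractLeft_ι, hd m hm, map_zero]
  | algebraMap r => rw [contractLeft_algebraMap]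
  | add x y _ _ hx hy => rw [map_add, hx, hy, add_zero]
  | mul x y _ _ hx hy => rw [contractLeft_mul, hx, hy, zero_mul, mul_zero, add_zero]

theorem exists_finset_mem_adjoin_ι_image (p : CliffordAlgebra Q) :
    ∃ s : Finset M, p ∈ Algebra.adjoin R (ι Q '' s) := by
  classical
  have mono {s t : Finset M} (h : s ⊆ t) :
      Algebra.adjoin R (ι Q '' s) ≤ Algebra.adjoin R (ι Q '' t) :=
    Algebra.adjoin_mono (Set.image_mono (Finset.coe_subset.mpr h))
  induction p using CliffordAlgebra.induction with
  | algebraMap r => exact ⟨∅, Subalgebra.algebraMap_mem _ r⟩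
  | ι v => exact ⟨{v}, Algebra.subset_adjoin ⟨v, Finset.mem_singleton_self v, rfl⟩⟩
  | mul a b ha hb =>
    obtain ⟨s, hs⟩ := ha
    obtain ⟨t, ht⟩ := hb
    exact ⟨s ∪ t, mul_mem (mono Finset.subset_union_left hs) (mono Finset.subset_union_right ht)⟩
  | add a b ha hb =>
    obtain ⟨s, hs⟩ := ha
    obtain ⟨t, ht⟩ := hb
    exact ⟨s ∪ t, add_mem (mono Finset.subset_union_left hs) (mono Finset.subset_union_right ht)⟩

theorem adjoin_ι_image_insert_of_mem_span {u : M} {s : Set M} (hu : u ∈ Submodule.span R s) :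
    Algebra.adjoin R (ι Q '' insert u s) = Algebra.adjoin R (ι Q '' s) := by
  refine le_antisymm (Algebra.adjoin_le ?_)
    (Algebra.adjoin_mono (Set.image_mono (Set.subset_insert u s)))
  rw [Set.image_insert_eq, Set.insert_subset_iff]
  refine ⟨Algebra.span_le_adjoin R _ ?_, Algebra.subset_adjoin⟩
  rw [Submodule.span_image]
  exact Submodule.mem_map_of_mem hu

theorem ι_mul_reverse_mul_involute {g : CliffordAlgebra Q} (hg : IsUnit g) {x y : M}
    (h : g * ι Q x * Ring.inverse (involute g) = ι Q y) :
    ι Q x * (reverse g * involute g) = involute (reverse g * involute g) * ι Q x := by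
  have hgx : g * ι Q x = ι Q y * involute g := by
    rw [← h, mul_assoc _ (Ring.inverse _), Ring.inverse_mul_cancel _ (hg.map involute), mul_one]
  have hxg : ι Q x * reverse g = reverse (involute g) * ι Q y := by
    simpa only [reverse.map_mul, reverse_ι] using congrArg reverse hgx
  calc ι Q x * (reverse g * involute g) = reverse (involute g) * (ι Q y * involute g) := by
        rw [← mul_assoc, hxg, mul_assoc]
    _ = involute (reverse g * involute g) * ι Q x := by
        rw [← hgx, map_mul, involute_involute, reverse_involute, mul_assoc]

end CliffordAlgebra

namespace ExteriorAlgebra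

variable {R M : Type*} [CommRing R] [AddCommGroup M] [Module R M]

theorem ι_mul_eq_involute_mul_ι (v : M) (a : ExteriorAlgebra R M) :
    ι R v * a = involute a * ι R v := by
  rw [← sub_eq_zero, ι_mul_sub_involute_mul_ι,
    show (0 : QuadraticForm R M).polarBilin v = 0 from LinearMap.ext fun w => by
      simp [QuadraticMap.polar], map_zero, LinearMap.zero_apply]

theorem exists_add_ι_mul_eq_of_mem_adjoin_insert {u : M} {s : Set M} {p : ExteriorAlgebra R M}
    (hp : p ∈ Algebra.adjoin R (ι R '' insert u s)) :
    ∃ x ∈ Algebra.adjoin R (ι R '' s), ∃ y ∈ Algebra.adjoin R (ι R '' s), x + ι R u * y = p := by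
  induction hp using Algebra.adjoin_induction with
  | mem p hp =>
    obtain ⟨m, rfl | hm, rfl⟩ := hp
    · exact ⟨0, zero_mem _, 1, one_mem _, by rw [zero_add, mul_one]⟩
    · exact ⟨ι R m, Algebra.subset_adjoin ⟨m, hm, rfl⟩, 0, zero_mem _, by rw [mul_zero, add_zero]⟩
  | algebraMap r =>
    exact ⟨algebraMap R _ r, Subalgebra.algebraMap_mem _ r, 0, zero_mem _, by
      rw [mul_zero, add_zero]⟩
  | add p q _ _ hp hq =>
    obtain ⟨x, hx, y, hy, rfl⟩ := hp
    obtain ⟨x', hx', y', hy', rfl⟩ := hq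
    exact ⟨x + x', add_mem hx hx', y + y', add_mem hy hy', by rw [mul_add]; abel⟩
  | mul p q _ _ hp hq =>
    obtain ⟨x, hx, y, hy, rfl⟩ := hp
    obtain ⟨x', hx', y', hy', rfl⟩ := hq
    refine ⟨x * x', mul_mem hx hx', involute x * y' + y * x',
      add_mem (mul_mem (involute_mem_adjoin_ι_image hx) hy') (mul_mem hy hx'), ?_⟩
    have mul_ι (z : ExteriorAlgebra R M) : z * ι R u = ι R u * involute z := by
      rw [ι_mul_eq_involute_mul_ι, involute_involute]
    have huu : ι R u * y * (ι R u * y') = 0 := by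
      rw [← mul_assoc, mul_assoc _ y, mul_ι, ← mul_assoc, ι_sq_zero, zero_mul, zero_mul]
    calc x * x' + ι R u * (involute x * y' + y * x')
        = x * x' + x * ι R u * y' + ι R u * y * x' := by rw [mul_ι]; noncomm_ring
      _ = (x + ι R u * y) * (x' + ι R u * y') := by
        rw [add_mul, mul_add, mul_add, huu]; noncomm_ring

end ExteriorAlgebra

theorem LinearMap.SeparatingRight.exists_apply_eq_on {K M N : Type*} [Field K]
    [AddCommGroup M] [Module K M] [AddCommGroup N] [Module K N] {B : M →ₗ[K] N →ₗ[K] K}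
    (hB : B.SeparatingRight) (W : Submodule K N) [FiniteDimensional K W]
    (f : Module.Dual K N) : ∃ v : M, ∀ w ∈ W, B v w = f w := by
  set μ : M →ₗ[K] Module.Dual K W := B.compl₂ W.subtype
  have hμ : Function.Surjective μ := by
    refine LinearMap.dualMap_injective_iff.mp <| (injective_iff_map_eq_zero _).mpr fun ψ hψ => ?_
    obtain ⟨w, rfl⟩ := (Module.evalEquiv K W).surjective ψ
    have hw : w = 0 := Subtype.ext <| hB w fun v => by
      simpa [μ] using LinearMap.congr_fun hψ v
    rw [hw, map_zero]
  obtain ⟨v, hv⟩ := hμ (f ∘ₗ W.subtype)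
  exact ⟨v, fun w hw => LinearMap.congr_fun hv ⟨w, hw⟩⟩

namespace ExteriorAlgebra

variable {K M : Type*} [Field K] [AddCommGroup M] [Module K M]

theorem mem_adjoin_of_contractLeft_eq_zero {d : Module.Dual K M} {u : M} {s : Set M}
    (hu : d u ≠ 0) (hs : ∀ m ∈ s, d m = 0) {p : ExteriorAlgebra K M}
    (hp : p ∈ Algebra.adjoin K (ι K '' insert u s)) (hd : contractLeft d p = 0) :
    p ∈ Algebra.adjoin K (ι K '' s) := by
  obtain ⟨x, hx, y, hy, rfl⟩ := exists_add_ι_mul_eq_of_mem_adjoin_insert hp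
  rw [map_add, contractLeft_ι_mul, contractLeft_eq_zero_of_mem_adjoin hs hx,
    contractLeft_eq_zero_of_mem_adjoin hs hy, mul_zero, sub_zero, zero_add, smul_eq_zero] at hd
  rwa [hd.resolve_left hu, mul_zero, add_zero]

theorem exists_eq_algebraMap_of_mem_adjoin {B : M →ₗ[K] M →ₗ[K] K} (hB : B.SeparatingRight)
    (s : Finset M) {p : ExteriorAlgebra K M} (hp : p ∈ Algebra.adjoin K (ι K '' s))
    (hBp : ∀ v, contractLeft (B v) p = 0) : ∃ r : K, p = algebraMap K _ r := by
  classical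
  induction s using Finset.induction_on with
  | empty =>
    rw [Finset.coe_empty, Set.image_empty, Algebra.adjoin_empty] at hp
    obtain ⟨r, rfl⟩ := Algebra.mem_bot.mp hp
    exact ⟨r, rfl⟩
  | insert u s _ ih =>
    rw [Finset.coe_insert] at hp
    by_cases hu : u ∈ Submodule.span K (s : Set M)
    · rw [adjoin_ι_image_insert_of_mem_span hu] at hp
      exact ih hp
    obtain ⟨f, hfu, hfs⟩ := Submodule.exists_dual_map_eq_bot_of_notMem hu inferInstance
    obtain ⟨v, hv⟩ := hB.exists_apply_eq_on (Submodule.span K ↑(insert u s)) f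
    refine ih (mem_adjoin_of_contractLeft_eq_zero (d := B v) ?_ (fun m hm => ?_) hp (hBp v))
    · rwa [hv u (Submodule.subset_span (Finset.mem_insert_self u s))]
    · rw [hv m (Submodule.subset_span (Finset.mem_insert_of_mem hm))]
      exact LinearMap.le_ker_iff_map.mpr hfs (Submodule.subset_span hm)

theorem exists_eq_algebraMap_of_forall_contractLeft_eq_zero {B : M →ₗ[K] M →ₗ[K] K}
    (hB : B.SeparatingRight) {p : ExteriorAlgebra K M} (hBp : ∀ v, contractLeft (B v) p = 0) :
    ∃ r : K, p = algebraMap K _ r :=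
  let ⟨s, hs⟩ := exists_finset_mem_adjoin_ι_image p
  exists_eq_algebraMap_of_mem_adjoin hB s hs hBp

end ExteriorAlgebra

theorem CliffordAlgebra.exists_eq_algebraMap_of_ι_mul_eq_involute_mul_ι {K M : Type*} [Field K]
    [Invertible (2 : K)] [AddCommGroup M] [Module K M] {Q : QuadraticForm K M}
    (hQ : (QuadraticMap.polarBilin Q).SeparatingLeft) {z : CliffordAlgebra Q}
    (hz : ∀ v, ι Q v * z = involute z * ι Q v) : ∃ r : K, z = algebraMap K _ r := by
  have hB : (QuadraticMap.polarBilin Q).SeparatingRight := fun w hw =>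
    hQ w fun u => by rw [QuadraticMap.polarBilin_apply_apply, QuadraticMap.polar_comm]; exact hw u
  obtain ⟨r, hr⟩ := ExteriorAlgebra.exists_eq_algebraMap_of_forall_contractLeft_eq_zero hB
    (p := equivExterior Q z) fun v => by
      rw [equivExterior, changeFormEquiv_apply, ← changeForm_contractLeft,
        ← ι_mul_sub_involute_mul_ι, hz v, sub_self, map_zero]
  refine ⟨r, (equivExterior Q).injective ?_⟩
  rw [hr, equivExterior, changeFormEquiv_apply, changeForm_algebraMap]

section
variable {R M : Type*} [CommRing R] [AddCommGroup M] [Module R M] {Q : QuadraticForm R M}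

/-- Clifford conjugation `star`, read through the periodicity isomorphism `F`. -/
noncomputable def vahlenConj (A : Matrix (Fin 2) (Fin 2) (CliffordAlgebra Q)) :
    Matrix (Fin 2) (Fin 2) (CliffordAlgebra Q) :=
  !![reverse (A 1 1), -reverse (A 0 1); -reverse (A 1 0), reverse (A 0 0)]

theorem vahlenConj_of (a b c d : CliffordAlgebra Q) :
    vahlenConj !![a, b; c, d] = !![reverse d, -reverse b; -reverse c, reverse a] := rfl

theorem vahlenConj_add (A B : Matrix (Fin 2) (Fin 2) (CliffordAlgebra Q)) :
    vahlenConj (A + B) = vahlenConj A + vahlenConj B := by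
  ext i j
  fin_cases i <;> fin_cases j <;> simp [vahlenConj, add_comm]

theorem vahlenConj_mul (A B : Matrix (Fin 2) (Fin 2) (CliffordAlgebra Q)) :
    vahlenConj (A * B) = vahlenConj B * vahlenConj A := by
  ext i j
  fin_cases i <;> fin_cases j <;> simp [vahlenConj, Matrix.mul_apply, reverse.map_mul, add_comm]

theorem vahlenConj_algebraMap (r : R) :
    vahlenConj (algebraMap R (Matrix (Fin 2) (Fin 2) (CliffordAlgebra Q)) r) =
      algebraMap R _ r := by
  ext i j
  fin_cases i <;> fin_cases j <;> simp [vahlenConj, Matrix.algebraMap_matrix_apply]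

end

section
variable {V : Type*} [AddCommGroup V] [Module ℝ V] {Q : QuadraticForm ℝ V}

theorem vahlenConj_jmat (x : V × ℝ × ℝ) : vahlenConj (jmat Q x) = -jmat Q x := by
  ext i j
  fin_cases i <;> fin_cases j <;> simp [vahlenConj, jmat]

theorem map_star_eq_vahlenConj
    {F : CliffordAlgebra (negQhat Q) ≃ₐ[ℝ] Matrix (Fin 2) (Fin 2) (CliffordAlgebra (-Q))}
    (hF : ∀ x, F (ι (negQhat Q) x) = jmat Q x) (m : CliffordAlgebra (negQhat Q)) :
    F (star m) = vahlenConj (F m) := by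
  induction m using CliffordAlgebra.induction with
  | algebraMap r => rw [star_algebraMap, AlgEquiv.commutes, vahlenConj_algebraMap]
  | ι x => rw [star_ι, map_neg, hF, vahlenConj_jmat]
  | mul m₁ m₂ h₁ h₂ => rw [star_mul, map_mul, map_mul, h₁, h₂, vahlenConj_mul]
  | add m₁ m₂ h₁ h₂ => rw [star_add, map_add, map_add, h₁, h₂, vahlenConj_add]

theorem negQhat_polarBilin_separatingLeft (hQ : (QuadraticMap.polarBilin Q).SeparatingLeft) :
    (QuadraticMap.polarBilin (negQhat Q)).SeparatingLeft := by
  rintro ⟨w, s, t⟩ hw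
  have hpolar (u : V) (s' t' : ℝ) : -QuadraticMap.polar Q w u + 2 * s * s' - 2 * t * t' = 0 := by
    have := hw (u, s', t')
    simp only [QuadraticMap.polarBilin_apply_apply, negQhat, QuadraticMap.polar_prod] at this
    simp only [QuadraticMap.polar, neg_apply, QuadraticMap.sq_apply] at this ⊢
    linear_combination this
  obtain rfl : w = 0 := hQ w fun u => by simpa using hpolar u 0 0
  obtain rfl : s = 0 := by simpa using hpolar 0 1 0
  obtain rfl : t = 0 := by simpa using hpolar 0 0 1
  rfl

end

theorem IsVahlen.exists_vahlenConj_mul_eq_algebraMap {V : Type*} [AddCommGroup V] [Module ℝ V]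
    {Q : QuadraticForm ℝ V} (hQ : (QuadraticMap.polarBilin Q).SeparatingLeft)
    {F : CliffordAlgebra (negQhat Q) ≃ₐ[ℝ] Matrix (Fin 2) (Fin 2) (CliffordAlgebra (-Q))}
    (hF : ∀ x, F (ι (negQhat Q) x) = jmat Q x) {A : Matrix (Fin 2) (Fin 2) (CliffordAlgebra (-Q))}
    (hA : IsVahlen Q F A) :
    ∃ r : ℝ, vahlenConj A * A = algebraMap ℝ _ r ∧ A * vahlenConj A = algebraMap ℝ _ r := by
  obtain ⟨hg, hlip⟩ := hA
  set g := F.symm A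
  obtain ⟨r, hr⟩ := exists_eq_algebraMap_of_ι_mul_eq_involute_mul_ι
    (negQhat_polarBilin_separatingLeft hQ) (z := reverse g * involute g) fun v =>
      let ⟨_, hw⟩ := hlip v
      ι_mul_reverse_mul_involute hg hw
  have hstar : star g * g = algebraMap ℝ _ r := by
    rw [star_def', ← AlgHom.commutes involute, ← hr, map_mul, involute_involute]
  have hstar' : g * star g = algebraMap ℝ _ r :=
    hg.mul_right_cancel (by rw [mul_assoc, hstar, Algebra.commutes])
  refine ⟨r, ?_, ?_⟩
  · rw [← F.apply_symm_apply A, ← map_star_eq_vahlenConj hF, ← map_mul, hstar, AlgEquiv.commutes]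
  · rw [← F.apply_symm_apply A, ← map_star_eq_vahlenConj hF, ← map_mul, hstar', AlgEquiv.commutes]

theorem mobius_sub_mobius {R A : Type*} [CommRing R] [Ring A] [Algebra R A]
    {a b c d a' b' c' d' : A} {r : R}
    (h : !![d', -b'; -c', a'] * !![a, b; c, d] = algebraMap R (Matrix (Fin 2) (Fin 2) A) r)
    {X Y : A} (hX : IsUnit (c * X + d)) (hY : IsUnit (c * Y + d)) (hY' : IsUnit (Y * c' + d')) :
    (a * X + b) * Ring.inverse (c * X + d) - (a * Y + b) * Ring.inverse (c * Y + d) =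
      algebraMap R A r * Ring.inverse (Y * c' + d') * (X - Y) * Ring.inverse (c * X + d) := by
  have entry (i j : Fin 2) := congr_fun₂ h i j
  have h00 : d' * a - b' * c = algebraMap R A r := by
    simpa [sub_eq_add_neg, Matrix.algebraMap_matrix_apply] using entry 0 0
  have h01 : d' * b - b' * d = 0 := by
    simpa [sub_eq_add_neg, Matrix.algebraMap_matrix_apply] using entry 0 1
  have h10 : a' * c - c' * a = 0 := by
    simpa [sub_eq_add_neg, add_comm, Matrix.algebraMap_matrix_apply] using entry 1 0
  have h11 : a' * d - c' * b = algebraMap R A r := by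
    simpa [sub_eq_add_neg, add_comm, Matrix.algebraMap_matrix_apply] using entry 1 1
  have cross (Z : A) :
      (Y * c' + d') * (a * Z + b) - (Y * a' + b') * (c * Z + d) = algebraMap R A r * (Z - Y) :=
    calc _ = (d' * a - b' * c) * Z - Y * (a' * d - c' * b) - Y * (a' * c - c' * a) * Z
          + (d' * b - b' * d) := by noncomm_ring
      _ = _ := by rw [h00, h01, h10, h11, ← Algebra.commutes r Y]; noncomm_ring
  have key : (Y * c' + d') * ((a * X + b) * Ring.inverse (c * X + d)
      - (a * Y + b) * Ring.inverse (c * Y + d)) * (c * X + d) = algebraMap R A r * (X - Y) := by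
    have hYY := cross Y
    rw [sub_self, mul_zero, sub_eq_zero] at hYY
    calc _ = (Y * c' + d') * (a * X + b) * (Ring.inverse (c * X + d) * (c * X + d))
          - (Y * c' + d') * (a * Y + b) * Ring.inverse (c * Y + d) * (c * X + d) := by
          noncomm_ring
      _ = (Y * c' + d') * (a * X + b)
          - (Y * a' + b') * ((c * Y + d) * Ring.inverse (c * Y + d)) * (c * X + d) := by
          rw [Ring.inverse_mul_cancel _ hX, mul_one, hYY]; noncomm_ring
      _ = _ := by rw [Ring.mul_inverse_cancel _ hY, mul_one, cross X]
  calc _ = Ring.inverse (Y * c' + d') * (Y * c' + d') * ((a * X + b) * Ring.inverse (c * X + d)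
        - (a * Y + b) * Ring.inverse (c * Y + d)) * ((c * X + d) * Ring.inverse (c * X + d)) := by
        rw [Ring.inverse_mul_cancel _ hY', Ring.mul_inverse_cancel _ hX, one_mul, mul_one]
    _ = Ring.inverse (Y * c' + d') * (algebraMap R A r * (X - Y)) * Ring.inverse (c * X + d) := by
        rw [← key]; noncomm_ring
    _ = _ := by rw [← mul_assoc, ← Algebra.commutes]

/-- for a Vahlen matrix `A = [[a,b],[c,d]]` and `x, y ∈ V` with
`cx+d` and `cy+d` invertible,
`Ax - Ay = Δ(A) (y c~ + d~)⁻¹ (x - y) (cx + d)⁻¹`, where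
`Az = (az+b)(cz+d)⁻¹` and `Δ(A) = a d~ - b c~`. -/
theorem vahlen_difference_formula (V : Type*) [AddCommGroup V] [Module ℝ V]
    (Q : QuadraticForm ℝ V)
    (hQnd : ∀ w : V, (∀ u : V, QuadraticMap.polar Q w u = 0) → w = 0)
    (F : CliffordAlgebra (negQhat Q) ≃ₐ[ℝ] Matrix (Fin 2) (Fin 2) (CliffordAlgebra (-Q)))
    (hF : ∀ x : V × ℝ × ℝ, F (ι (negQhat Q) x) = jmat Q x)
    (a b c d : CliffordAlgebra (-Q)) (hA : IsVahlen Q F !![a, b; c, d])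
    (x y : V) (hx : IsUnit (c * ι (-Q) x + d)) (hy : IsUnit (c * ι (-Q) y + d)) :
    (a * ι (-Q) x + b) * Ring.inverse (c * ι (-Q) x + d) -
        (a * ι (-Q) y + b) * Ring.inverse (c * ι (-Q) y + d) =
      (a * reverse d - b * reverse c) *
        Ring.inverse (ι (-Q) y * reverse c + reverse d) *
        (ι (-Q) x - ι (-Q) y) * Ring.inverse (c * ι (-Q) x + d) := by
  obtain ⟨r, hleft, hright⟩ := hA.exists_vahlenConj_mul_eq_algebraMap hQnd hF
  rw [vahlenConj_of] at hleft hright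
  have hΔ : a * reverse d - b * reverse c = algebraMap ℝ _ r := by
    simpa [sub_eq_add_neg, Matrix.algebraMap_matrix_apply] using congr_fun₂ hright 0 0
  have hy' : IsUnit (ι (-Q) y * reverse c + reverse d) := by
    have := (hy.map reverseOp).unop
    rwa [unop_reverseOp, map_add, reverse.map_mul, reverse_ι] at this
  rw [hΔ]
  exact mobius_sub_mobius hleft hx hy hy'
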